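/- Let H_4 be the graph on n vertices obtained from a 4-cycle uvwx by attaching n − 4 pendant edges to the vertex u. Then tpc(H_4) = n − 2 if n = 5 or n = 6, and tpc(H_4) = n − 3 if n ≥ 7. -/

import Mathlib

/-- Interleave two lists, starting with the first. -/
def List.interleaveTPC {α : Type*} : List α → List α → List α
  | [], ys => ys
  | x :: xs, ys => x :: List.interleaveTPC ys xs
termination_by xs ys => xs.length + ys.length

namespace SimpleGraph

variable {V : Type*} {α : Type*} {G : SimpleGraph V}

/-- The sequence of colors `cE e₀, cV v₁, cE e₁, cV v₂, …, cE e_{m-1}` of the edges and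
internal vertices of a walk, in order. -/
def Walk.totalColorSeq (cV : V → α) (cE : Sym2 V → α) {u v : V} (p : G.Walk u v) : List α :=
  (p.edges.map cE).interleaveTPC (p.support.tail.dropLast.map cV)

/-- A walk is total-proper if in its color sequence, any two entries at distance 1 or 2
are distinct.  This says exactly that adjacent edges get distinct colors, adjacent internal
vertices get distinct colors, and every internal vertex gets a color distinct from those of
its incident edges on the walk. -/
def Walk.IsTotalProper (cV : V → α) (cE : Sym2 V → α) {u v : V} (p : G.Walk u v) : Prop :=
  ∀ i a b, (p.totalColorSeq cV cE)[i]? = some a →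
    ((p.totalColorSeq cV cE)[i + 1]? = some b ∨ (p.totalColorSeq cV cE)[i + 2]? = some b) →
    a ≠ b

/-- A total coloring (given by a vertex coloring `cV` and an edge coloring `cE`) makes `G`
total-proper connected if every two distinct vertices are joined by a total-proper path. -/
def IsTPCColoring (G : SimpleGraph V) (cV : V → α) (cE : Sym2 V → α) : Prop :=
  ∀ u v : V, u ≠ v → ∃ p : G.Walk u v, p.IsPath ∧ p.IsTotalProper cV cE

/-- The total-proper connection number: the minimum number of colors in a total coloring
making `G` total-proper connected. -/
noncomputable def tpc (G : SimpleGraph V) : ℕ :=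
  sInf {k | ∃ (cV : V → Fin k) (cE : Sym2 V → Fin k), G.IsTPCColoring cV cE}

end SimpleGraph

/-- The graph `H₄` on `n` vertices: a 4-cycle `u v w x` on vertices `0, 1, 2, 3` with `n - 4`
pendant edges attached to the vertex `u = 0`. -/
def graphH4 (n : ℕ) : SimpleGraph (Fin n) :=
  SimpleGraph.fromRel
    (fun a b => (a.val < 4 ∧ b.val < 4 ∧ (a.val + 1) % 4 = b.val) ∨ (a.val = 0 ∧ 4 ≤ b.val))


/-!
Lower bounds. The only path between two leaves is leaf–u–leaf, so the `n - 4` pendant edges and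
the vertex `u` carry pairwise distinct colours, which gives `n - 3` colours once there are two
leaves. For `n = 5`, a path between non-adjacent vertices has an internal vertex, which already
needs three colours. For `n = 6`, three colours are used up by the two pendant edges and `u`, so a
path from either leaf leaves `u` along a cycle edge coloured like the other pendant edge. The two
leaves therefore reach `w` on opposite sides of the cycle; the leaf going through `v` cannot use
the edge `ux` and must reach `x` the long way round, which forces the colours along the cycle and
makes the other leaf's route to `w` clash.

Upper bounds. Colour the cycle edges alternately `0, 1`, the vertices `v, x` by `2`, `w` by `3`,
the pendant edges by distinct colours, and `u` by a colour outside `{0, 1, 2}` not used on a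
pendant edge: `max 4 (n - 3)` colours. A leaf reaches a cycle vertex by going round the side whose
first edge is coloured differently from its own pendant edge. For `n = 5` an explicit colouring
with three colours is checked by computation.
-/

namespace List

variable {α β : Type*}

@[simp]
theorem interleaveTPC_nil_left (ys : List α) : [].interleaveTPC ys = ys := by
  rw [interleaveTPC]

@[simp]
theorem interleaveTPC_cons_left (x : α) (xs ys : List α) :
    (x :: xs).interleaveTPC ys = x :: ys.interleaveTPC xs := by
  rw [interleaveTPC]

theorem interleaveTPC_map (f : α → β) (xs ys : List α) :
    (xs.map f).interleaveTPC (ys.map f) = (xs.interleaveTPC ys).map f := by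
  fun_induction interleaveTPC xs ys <;> simp_all

theorem interleaveTPC_append {a b : List α} (c d : List α) (h : a.length = b.length) :
    (a ++ c).interleaveTPC (b ++ d) = a.interleaveTPC b ++ c.interleaveTPC d := by
  induction a generalizing b with
  | nil => simp_all [List.length_eq_zero_iff.mp h.symm]
  | cons x a ih =>
    obtain ⟨y, b, rfl⟩ := List.exists_cons_of_length_eq_add_one h.symm
    simp [ih (by simpa using h)]

theorem interleaveTPC_reverse {xs ys : List α} (h : xs.length = ys.length + 1) :
    xs.reverse.interleaveTPC ys.reverse = (xs.interleaveTPC ys).reverse := by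
  induction ys generalizing xs with
  | nil =>
    obtain ⟨x, rfl⟩ := List.length_eq_one_iff.mp h
    simp
  | cons y ys ih =>
    obtain ⟨x, xs, rfl⟩ := List.exists_cons_of_length_eq_add_one h
    obtain ⟨x₀, r, hr⟩ := List.exists_cons_of_length_eq_add_one
      (by simpa using h : xs.reverse.length = ys.length + 1)
    have hlen : ys.reverse.length = r.length := by
      have := congrArg length hr
      simp_all
    have ih' := ih (by simpa using h)
    rw [hr] at ih'
    simp only [reverse_cons, hr, cons_append, interleaveTPC_cons_left,
      interleaveTPC_append _ _ hlen] at ih' ⊢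
    simp [← ih']

def DistinctWithinTwo (l : List α) : Prop :=
  ∀ i a b, l[i]? = some a → (l[i + 1]? = some b ∨ l[i + 2]? = some b) → a ≠ b

@[simp]
theorem distinctWithinTwo_nil : ([] : List α).DistinctWithinTwo := by
  simp [DistinctWithinTwo]

@[simp]
theorem distinctWithinTwo_cons {a : α} {l : List α} :
    (a :: l).DistinctWithinTwo ↔ (∀ b ∈ l.take 2, a ≠ b) ∧ l.DistinctWithinTwo := by
  constructor
  · intro h
    refine ⟨fun b hb => ?_, fun i x y hx hy => h (i + 1) x y hx hy⟩
    obtain ⟨j, hj, rfl⟩ := List.getElem_of_mem hb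
    simp only [length_take] at hj
    refine h 0 a _ rfl ?_
    rcases (by omega : j = 0 ∨ j = 1) with rfl | rfl <;> simp
  · rintro ⟨hhead, htail⟩ (_ | i) x y hx hy
    · simp only [getElem?_cons_zero, Option.some.injEq, getElem?_cons_succ] at hx hy
      subst hx
      refine hhead y ?_
      rw [List.mem_iff_getElem?]
      rcases hy with hy | hy
      · exact ⟨0, by simpa using hy⟩
      · exact ⟨1, by simpa using hy⟩
    · exact htail i x y hx hy

instance decidableDistinctWithinTwo [DecidableEq α] :
    DecidablePred (DistinctWithinTwo (α := α))
  | [] => isTrue distinctWithinTwo_nil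
  | _ :: l =>
    have := decidableDistinctWithinTwo l
    decidable_of_iff _ distinctWithinTwo_cons.symm

theorem distinctWithinTwo_map_iff {f : α → β} (hf : Function.Injective f) {l : List α} :
    (l.map f).DistinctWithinTwo ↔ l.DistinctWithinTwo := by
  simp only [DistinctWithinTwo, getElem?_map, Option.map_eq_some_iff]
  constructor
  · rintro h i a b ha hb rfl
    exact h i (f a) (f a) ⟨a, ha, rfl⟩ (hb.imp (⟨a, ·, rfl⟩) (⟨a, ·, rfl⟩)) rfl
  · rintro h i _ _ ⟨a, ha, rfl⟩ (⟨b, hb, rfl⟩ | ⟨b, hb, rfl⟩)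
    · exact hf.ne (h i a b ha (Or.inl hb))
    · exact hf.ne (h i a b ha (Or.inr hb))

theorem DistinctWithinTwo.reverse {l : List α} (h : l.DistinctWithinTwo) :
    l.reverse.DistinctWithinTwo := by
  have flip : ∀ i d a b, l.reverse[i]? = some a → l.reverse[i + d]? = some b →
      l[l.length - 1 - (i + d)]? = some b ∧ l[l.length - 1 - (i + d) + d]? = some a := by
    intro i d a b ha hb
    have hlt := (getElem?_eq_some_iff.mp hb).1
    rw [length_reverse] at hlt
    rw [← getElem?_reverse' (l := l) (i := i + d) (by omega),
      ← getElem?_reverse' (l := l) (i := i) (by omega)]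
    exact ⟨hb, ha⟩
  rintro i a b ha (hb | hb)
  · obtain ⟨hb', ha'⟩ := flip i 1 a b ha hb
    exact (h _ b a hb' (Or.inl ha')).symm
  · obtain ⟨hb', ha'⟩ := flip i 2 a b ha hb
    exact (h _ b a hb' (Or.inr ha')).symm

end List

namespace SimpleGraph

variable {V α β : Type*} {G : SimpleGraph V} {cV : V → α} {cE : Sym2 V → α}

@[simp]
def supportColorSeq (cV : V → α) (cE : Sym2 V → α) (l : List V) : List α :=
  (l.zipWith (fun a b => cE s(a, b)) l.tail).interleaveTPC (l.tail.dropLast.map cV)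

namespace Walk

@[simp]
theorem totalColorSeq_cons_nil {u v : V} (h : G.Adj u v) :
    (cons h nil).totalColorSeq cV cE = [cE s(u, v)] := by
  simp [totalColorSeq]

@[simp]
theorem totalColorSeq_cons_cons {u v w x : V} (h : G.Adj u v) (h' : G.Adj v w)
    (p : G.Walk w x) :
    (cons h (cons h' p)).totalColorSeq cV cE =
      cE s(u, v) :: cV v :: (cons h' p).totalColorSeq cV cE := by
  simp [totalColorSeq, List.dropLast_cons_of_ne_nil p.support_ne_nil]

theorem totalColorSeq_eq_supportColorSeq {u v : V} (p : G.Walk u v) :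
    p.totalColorSeq cV cE = supportColorSeq cV cE p.support := by
  rw [totalColorSeq, edges_eq_zipWith_support, List.map_zipWith, supportColorSeq]

theorem totalColorSeq_comp (f : α → β) {u v : V} (p : G.Walk u v) :
    p.totalColorSeq (f ∘ cV) (f ∘ cE) = (p.totalColorSeq cV cE).map f := by
  simp only [totalColorSeq, ← List.map_map, List.interleaveTPC_map]

theorem totalColorSeq_reverse {u v : V} (p : G.Walk u v) :
    p.reverse.totalColorSeq cV cE = (p.totalColorSeq cV cE).reverse := by
  cases p with
  | nil => simp [totalColorSeq]
  | cons h q =>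
    rw [totalColorSeq, totalColorSeq, edges_reverse, support_reverse, List.tail_reverse,
      List.dropLast_reverse, List.tail_dropLast, List.map_reverse, List.map_reverse,
      List.interleaveTPC_reverse (by simp)]

theorem isTotalProper_iff {u v : V} {p : G.Walk u v} :
    p.IsTotalProper cV cE ↔ (p.totalColorSeq cV cE).DistinctWithinTwo :=
  Iff.rfl

instance [DecidableEq α] {u v : V} (p : G.Walk u v) : Decidable (p.IsTotalProper cV cE) :=
  decidable_of_iff _ isTotalProper_iff.symm

theorem IsTotalProper.reverse {u v : V} {p : G.Walk u v} (h : p.IsTotalProper cV cE) :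
    p.reverse.IsTotalProper cV cE := by
  rw [isTotalProper_iff, totalColorSeq_reverse]
  exact List.DistinctWithinTwo.reverse h

theorem isTotalProper_comp_iff {f : α → β} (hf : Function.Injective f) {u v : V}
    {p : G.Walk u v} : p.IsTotalProper (f ∘ cV) (f ∘ cE) ↔ p.IsTotalProper cV cE := by
  rw [isTotalProper_iff, totalColorSeq_comp, List.distinctWithinTwo_map_iff hf]
  rfl

end Walk

theorem exists_isPath_isTotalProper_of_support (l : List V) (hne : l ≠ [])
    (hchain : l.IsChain G.Adj) (hnd : l.Nodup)
    (hc : (supportColorSeq cV cE l).DistinctWithinTwo) :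
    ∃ p : G.Walk (l.head hne) (l.getLast hne), p.IsPath ∧ p.IsTotalProper cV cE :=
  ⟨.ofSupport l hne hchain, (Walk.isPath_def _).mpr (by simpa), by
    rwa [Walk.isTotalProper_iff, Walk.totalColorSeq_eq_supportColorSeq, Walk.support_ofSupport]⟩

theorem isTPCColoring_of_forall_lt [LinearOrder V]
    (h : ∀ u v, v < u → ∃ p : G.Walk u v, p.IsPath ∧ p.IsTotalProper cV cE) :
    G.IsTPCColoring cV cE := by
  intro u v huv
  rcases huv.lt_or_gt with huv | huv
  · obtain ⟨p, hp, hpc⟩ := h v u huv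
    exact ⟨p.reverse, hp.reverse, hpc.reverse⟩
  · exact h u v huv

theorem isTPCColoring_comp_iff {f : α → β} (hf : Function.Injective f) :
    G.IsTPCColoring (f ∘ cV) (f ∘ cE) ↔ G.IsTPCColoring cV cE := by
  simp only [IsTPCColoring, Walk.isTotalProper_comp_iff hf]

instance [Fintype V] [DecidableEq V] [DecidableRel G.Adj] [DecidableEq α] :
    Decidable (G.IsTPCColoring cV cE) :=
  decidable_of_iff
    (∀ u v, u ≠ v → ∃ p ∈ G.finsetWalkLengthLT (Fintype.card V) u v,
      p.support.Nodup ∧ p.IsTotalProper cV cE) <| by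
    refine forall₂_congr fun u v => imp_congr_right fun _ => ⟨?_, ?_⟩
    · rintro ⟨p, -, hp, hpc⟩
      exact ⟨p, (Walk.isPath_def p).mpr hp, hpc⟩
    · rintro ⟨p, hp, hpc⟩
      exact ⟨p, mem_finsetWalkLengthLT_iff.mpr hp.length_lt, hp.support_nodup, hpc⟩

theorem tpc_eq_of_isTPCColoring {m : ℕ} (cV : V → ℕ) (cE : Sym2 V → ℕ) (hV : ∀ v, cV v < m)
    (hE : ∀ e, cE e < m) (hc : G.IsTPCColoring cV cE)
    (hmin : ∀ k (cV : V → Fin k) (cE : Sym2 V → Fin k), G.IsTPCColoring cV cE → m ≤ k) :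
    G.tpc = m := by
  have hm : m ∈ {k | ∃ (cV : V → Fin k) (cE : Sym2 V → Fin k), G.IsTPCColoring cV cE} :=
    ⟨fun v => ⟨cV v, hV v⟩, fun e => ⟨cE e, hE e⟩,
      (isTPCColoring_comp_iff Fin.val_injective).mp hc⟩
  exact le_antisymm (Nat.sInf_le hm) (le_csInf ⟨m, hm⟩ fun k ⟨cV, cE, hc⟩ => hmin k cV cE hc)

namespace IsTPCColoring

theorem three_le_card [Fintype α] (hc : G.IsTPCColoring cV cE) {u v : V} (huv : u ≠ v)
    (hadj : ¬G.Adj u v) : 3 ≤ Fintype.card α := by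
  classical
  obtain ⟨p, -, hp⟩ := hc u v huv
  obtain ⟨x, y, z, l, hseq⟩ : ∃ x y z l, p.totalColorSeq cV cE = x :: y :: z :: l := by
    cases p with
    | nil => exact absurd rfl huv
    | cons h q =>
      cases q with
      | nil => exact absurd h hadj
      | cons h' r => cases r <;> simp
  rw [Walk.isTotalProper_iff, hseq, List.distinctWithinTwo_cons,
    List.distinctWithinTwo_cons] at hp
  have hxyz : ({x, y, z} : Finset α).card = 3 := Finset.card_eq_three.mpr
    ⟨x, y, z, hp.1 y (by simp), hp.1 z (by simp), hp.2.1 z (by simp), rfl⟩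
  exact hxyz ▸ Finset.card_le_univ _

theorem pendant_colors_ne (hc : G.IsTPCColoring cV cE) {l m z : V}
    (hl : G.neighborSet l = {z}) (hm : G.neighborSet m = {z}) (hlm : l ≠ m) :
    cE s(l, z) ≠ cV z ∧ cE s(l, z) ≠ cE s(m, z) := by
  have hadj : ∀ {x w}, G.neighborSet x = {z} → (G.Adj x w ↔ w = z) := fun hx => by
    rw [← mem_neighborSet, hx, Set.mem_singleton_iff]
  obtain ⟨p, hp, hpc⟩ := hc l m hlm
  cases p with
  | nil => exact absurd rfl hlm
  | @cons _ x _ h q =>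
    obtain rfl : z = x := ((hadj hl).mp h).symm
    cases q with
    | nil => exact absurd ((hadj hm).mp h.symm) h.ne
    | cons h' r =>
      cases r with
      | nil =>
        simp [Walk.isTotalProper_iff, Sym2.eq_swap] at hpc
        tauto
      | cons h'' r =>
        have hz := (hadj hm).mp (Walk.adj_penultimate (p := .cons h'' r) Walk.not_nil_cons).symm
        have hzr : z ∈ (Walk.cons h'' r).support :=
          hz ▸ List.mem_of_mem_dropLast (Walk.penultimate_mem_dropLast_support Walk.not_nil_cons)
        exact absurd hzr (Walk.cons_isPath_iff _ _ |>.mp hp.of_cons).2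

theorem card_add_one_le [Fintype α] (hc : G.IsTPCColoring cV cE) {z : V} {S : Finset V}
    (hS : ∀ l ∈ S, G.neighborSet l = {z}) (h2 : 2 ≤ S.card) : S.card + 1 ≤ Fintype.card α := by
  let f : Option S → α := fun o => o.elim (cV z) fun l => cE s(l, z)
  have hf : Function.Injective f := by
    rintro (_ | ⟨l, hl⟩) (_ | ⟨m, hm⟩) h
    · rfl
    · obtain ⟨l, hl', hlm⟩ := Finset.exists_mem_ne (s := S) (by omega) m
      exact absurd h.symm (hc.pendant_colors_ne (hS m hm) (hS l hl') hlm.symm).1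
    · obtain ⟨m, hm', hlm⟩ := Finset.exists_mem_ne (s := S) (by omega) l
      exact absurd h (hc.pendant_colors_ne (hS l hl) (hS m hm') hlm.symm).1
    · by_contra hlm
      exact (hc.pendant_colors_ne (hS l hl) (hS m hm) fun h' => hlm (by simp [h'])).2 h
  simpa using Fintype.card_le_of_injective f hf

end IsTPCColoring

end SimpleGraph

open SimpleGraph

section graphH4

variable {α : Type*}

instance (n : ℕ) : DecidableRel (graphH4 n).Adj := fun a b =>
  decidable_of_iff _ (fromRel_adj _ a b).symm

@[simp]
theorem graphH4_adj {n : ℕ} {a b : Fin n} :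
    (graphH4 n).Adj a b ↔ a ≠ b ∧
      ((a.val < 4 ∧ b.val < 4 ∧ (a.val + 1) % 4 = b.val) ∨ (a.val = 0 ∧ 4 ≤ b.val) ∨
        (b.val < 4 ∧ a.val < 4 ∧ (b.val + 1) % 4 = a.val) ∨ (b.val = 0 ∧ 4 ≤ a.val)) := by
  rw [graphH4, fromRel_adj]
  tauto

theorem graphH4_neighborSet_of_four_le {n : ℕ} {l : Fin n} (hl : 4 ≤ l.val) :
    (graphH4 n).neighborSet l = {⟨0, by omega⟩} := by
  ext w
  simp [Fin.ext_iff]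
  omega

theorem graphH4_sub_three_le_card [Fintype α] {n : ℕ} (h6 : 6 ≤ n) {cV : Fin n → α}
    {cE : Sym2 (Fin n) → α} (hc : (graphH4 n).IsTPCColoring cV cE) :
    n - 3 ≤ Fintype.card α := by
  have := hc.card_add_one_le (z := ⟨0, by omega⟩) (S := Finset.Ici ⟨4, by omega⟩)
    (fun l hl => graphH4_neighborSet_of_four_le (Fin.le_iff_val_le_val.mp (Finset.mem_Ici.mp hl)))
    (by simp; omega)
  simp only [Fin.card_Ici] at this
  omega

theorem graphH4_six_support_of_isPath {l : Fin 6} (hl : 4 ≤ l) :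
    (∀ p : (graphH4 6).Walk l 2, p.IsPath →
      p.support = [l, 0, 1, 2] ∨ p.support = [l, 0, 3, 2]) ∧
    (∀ p : (graphH4 6).Walk l 3, p.IsPath →
      p.support = [l, 0, 3] ∨ p.support = [l, 0, 1, 2, 3]) := by
  have key : ∀ l : Fin 6, 4 ≤ l →
      (∀ p ∈ (graphH4 6).finsetWalkLengthLT 6 l 2, p.support.Nodup →
        p.support = [l, 0, 1, 2] ∨ p.support = [l, 0, 3, 2]) ∧
      (∀ p ∈ (graphH4 6).finsetWalkLengthLT 6 l 3, p.support.Nodup →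
        p.support = [l, 0, 3] ∨ p.support = [l, 0, 1, 2, 3]) := by
    decide +kernel
  obtain ⟨h2, h3⟩ := key l hl
  exact ⟨fun p hp => h2 p (mem_finsetWalkLengthLT_iff.mpr hp.length_lt) hp.support_nodup,
    fun p hp => h3 p (mem_finsetWalkLengthLT_iff.mpr hp.length_lt) hp.support_nodup⟩

theorem graphH4_six_four_le_card [Fintype α] {cV : Fin 6 → α} {cE : Sym2 (Fin 6) → α}
    (hc : (graphH4 6).IsTPCColoring cV cE) : 4 ≤ Fintype.card α := by
  classical
  by_contra! h3
  obtain ⟨h4v, h45⟩ := hc.pendant_colors_ne (graphH4_neighborSet_of_four_le (l := 4) le_rfl)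
    (graphH4_neighborSet_of_four_le (l := 5) (by decide)) (by decide)
  obtain ⟨h5v, -⟩ := hc.pendant_colors_ne (graphH4_neighborSet_of_four_le (l := 5) (by decide))
    (graphH4_neighborSet_of_four_le (l := 4) le_rfl) (by decide)
  have hcol : ∀ x, x = cE s(4, 0) ∨ x = cV 0 ∨ x = cE s(5, 0) := by
    have hcard : ({cE s(4, 0), cV 0, cE s(5, 0)} : Finset α).card = 3 :=
      Finset.card_eq_three.mpr ⟨_, _, _, h4v, h45, h5v.symm, rfl⟩
    have hα : Fintype.card α = 3 := le_antisymm (by omega) (hcard ▸ Finset.card_le_univ _)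
    simpa [Finset.ext_iff] using Finset.eq_univ_of_card _ (hcard.trans hα.symm)
  have c01 := hcol (cE s(0, 1))
  have c03 := hcol (cE s(0, 3))
  have c12 := hcol (cE s(1, 2))
  have c23 := hcol (cE s(2, 3))
  have c1 := hcol (cV 1)
  have c2 := hcol (cV 2)
  have c3 := hcol (cV 3)
  obtain ⟨p42, hp42, hc42⟩ := hc 4 2 (by decide)
  obtain ⟨p52, hp52, hc52⟩ := hc 5 2 (by decide)
  obtain ⟨p43, hp43, hc43⟩ := hc 4 3 (by decide)
  obtain ⟨p53, hp53, hc53⟩ := hc 5 3 (by decide)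
  rw [Walk.isTotalProper_iff, Walk.totalColorSeq_eq_supportColorSeq] at hc42 hc52 hc43 hc53
  rcases (graphH4_six_support_of_isPath (l := 4) le_rfl).1 p42 hp42 with h | h <;>
  rw [h] at hc42 <;>
  rcases (graphH4_six_support_of_isPath (l := 5) (by decide)).1 p52 hp52 with h | h <;>
  rw [h] at hc52 <;>
  rcases (graphH4_six_support_of_isPath (l := 4) le_rfl).2 p43 hp43 with h | h <;>
  rw [h] at hc43 <;>
  rcases (graphH4_six_support_of_isPath (l := 5) (by decide)).2 p53 hp53 with h | h <;>
  rw [h] at hc53 <;>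
  simp [Sym2.eq_swap] at hc42 hc52 hc43 hc53 h4v h45 h5v c01 c03 c12 c23 c1 c2 c3 <;>
  grind

/-- The cycle edges `uv, wx` get colour `0` and `vw, xu` colour `1`; the pendant edge at the leaf
`l` gets colour `l - 4`. -/
@[simp]
def graphH4EdgeColor (n : ℕ) (e : Sym2 (Fin n)) : ℕ :=
  if 4 ≤ (e.sup : ℕ) then e.sup - 4 else if (e.inf : ℕ) / 2 = e.sup / 2 then 0 else 1

@[simp]
def graphH4VertexColor (n : ℕ) (v : Fin n) : ℕ :=
  if v.val = 0 then max 3 (n - 4) else if v.val = 2 then 3 else 2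

theorem graphH4_isTPCColoring {n : ℕ} (h6 : 6 ≤ n) :
    (graphH4 n).IsTPCColoring (graphH4VertexColor n) (graphH4EdgeColor n) := by
  refine isTPCColoring_of_forall_lt fun ⟨u, hu⟩ ⟨v, hv⟩ hvu => ?_
  rw [Fin.mk_lt_mk] at hvu
  have path (a : Fin n) (l : List (Fin n))
      (h : (a :: l).IsChain (graphH4 n).Adj ∧ (a :: l).Nodup ∧
        (supportColorSeq (graphH4VertexColor n) (graphH4EdgeColor n) (a :: l)).DistinctWithinTwo) :=
    exists_isPath_isTotalProper_of_support (a :: l) (List.cons_ne_nil a l) h.1 h.2.1 h.2.2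
  rcases Nat.lt_or_ge u 4 with hu4 | hu4
  · interval_cases u <;> interval_cases v
    · exact path ⟨1, hu⟩ [⟨0, hv⟩] (by simp)
    · exact path ⟨2, hu⟩ [⟨1, by omega⟩, ⟨0, hv⟩] (by simp)
    · exact path ⟨2, hu⟩ [⟨1, hv⟩] (by simp)
    · exact path ⟨3, hu⟩ [⟨0, hv⟩] (by simp)
    · exact path ⟨3, hu⟩ [⟨0, by omega⟩, ⟨1, hv⟩] (by simp; omega)
    · exact path ⟨3, hu⟩ [⟨2, hv⟩] (by simp)
  rcases Nat.lt_or_ge v 4 with hv4 | hv4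
  · by_cases hu' : u = 4
    · subst hu'
      interval_cases v
      · exact path ⟨4, hu⟩ [⟨0, hv⟩] (by simp)
      · exact path ⟨4, hu⟩ [⟨0, by omega⟩, ⟨3, by omega⟩, ⟨2, by omega⟩, ⟨1, hv⟩]
          (by simp; omega)
      · exact path ⟨4, hu⟩ [⟨0, by omega⟩, ⟨3, by omega⟩, ⟨2, hv⟩] (by simp; omega)
      · exact path ⟨4, hu⟩ [⟨0, by omega⟩, ⟨3, hv⟩] (by simp; omega)
    · interval_cases v
      · exact path ⟨u, hu⟩ [⟨0, hv⟩] (by simp [hu4]; omega)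
      · exact path ⟨u, hu⟩ [⟨0, by omega⟩, ⟨1, hv⟩] (by simp [hu4]; omega)
      · exact path ⟨u, hu⟩ [⟨0, by omega⟩, ⟨1, by omega⟩, ⟨2, hv⟩] (by simp [hu4]; omega)
      · exact path ⟨u, hu⟩ [⟨0, by omega⟩, ⟨1, by omega⟩, ⟨2, by omega⟩, ⟨3, hv⟩]
          (by simp [hu4]; omega)
  · exact path ⟨u, hu⟩ [⟨0, by omega⟩, ⟨v, hv⟩] (by simp [hu4, hv4]; omega)

theorem tpc_graphH4_of_six_le {n : ℕ} (h6 : 6 ≤ n) : (graphH4 n).tpc = max 4 (n - 3) := by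
  refine tpc_eq_of_isTPCColoring _ _ (fun v => ?_) (fun e => ?_) (graphH4_isTPCColoring h6)
    fun k cV cE hc => ?_
  · simp only [graphH4VertexColor]
    split_ifs <;> omega
  · simp only [graphH4EdgeColor]
    have := e.sup.isLt
    split_ifs <;> omega
  · have hsub := graphH4_sub_three_le_card h6 hc
    rcases h6.eq_or_lt with rfl | h7
    · simpa using graphH4_six_four_le_card hc
    · simp only [Fintype.card_fin] at hsub
      omega

theorem tpc_graphH4_five : (graphH4 5).tpc = 3 := by
  refine tpc_eq_of_isTPCColoring ![1, 0, 2, 0, 0]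
    (fun e => if e = s(0, 1) then 2 else if e = s(1, 2) then 1 else 0) (by decide)
    (fun e => by split_ifs <;> omega) (by decide +kernel) fun k cV cE hc => ?_
  simpa using hc.three_le_card (u := 4) (v := 2) (by decide) (by decide)

end graphH4

open SimpleGraph in
theorem tpc_H4_general (n : ℕ) :
    ((n = 5 ∨ n = 6) → (graphH4 n).tpc = n - 2) ∧ (7 ≤ n → (graphH4 n).tpc = n - 3) := by
  refine ⟨?_, fun h7 => ?_⟩
  · rintro (rfl | rfl)
    · exact tpc_graphH4_five
    · exact tpc_graphH4_of_six_le le_rfl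
  · rw [tpc_graphH4_of_six_le (by omega), max_eq_right (by omega)]

open SimpleGraph in
theorem tpc_H4 (n : ℕ) (h5 : 5 ≤ n) :
    ((n = 5 ∨ n = 6) → (graphH4 n).tpc = n - 2) ∧ (7 ≤ n → (graphH4 n).tpc = n - 3) :=
  tpc_H4_general n
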